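/- arXiv:1902.00718 — 3 statements merged into one kernel-verified Lean document; each statement's English description precedes it below -/
import Mathlib

section
/- Let χ be an odd primitive Dirichlet character of conductor f (so χ(-1) = -1). Then Σ_{k=1}^{f} χ̄(k)·Log(1 + ζ_f^{-k}) = -(2πi/f)·Σ_{1 ≤ k < f/2} χ̄(k)·k, where Log denotes the principal branch of the complex logarithm. -/
/-!
Pair the terms `k` and `f - k`. Oddness gives `χ̄(f - k) = -χ̄(k)` (and kills the terms with
`2k = f` and `k = f`), so the sum becomes `∑_{2k < f} χ̄(k) (Log(1 + ζ^{-k}) - Log(1 + ζ^{k}))`.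
For `|t| < π` one has `1 + e^{it} = 2 cos(t/2) e^{it/2}` with `2 cos(t/2) > 0`, hence
`Log(1 + e^{it}) = log(2 cos(t/2)) + it/2`; with `t = ∓2πk/f` the real parts cancel and each
difference equals `-2πik/f`.
-/

open Complex

lemma Complex.log_one_add_exp_mul_I {t : ℝ} (h₁ : -Real.pi < t) (h₂ : t < Real.pi) :
    log (1 + exp (t * I)) = Real.log (2 * Real.cos (t / 2)) + (t / 2 : ℝ) * I := by
  have hcos : 0 < Real.cos (t / 2) :=
    Real.cos_pos_of_mem_Ioo ⟨by linarith, by linarith⟩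
  have hpolar : 1 + exp (t * I) = exp (Real.log (2 * Real.cos (t / 2)) + (t / 2 : ℝ) * I) := by
    rw [exp_add, ← ofReal_exp, Real.exp_log (by positivity),
      show (t : ℂ) * I = (2 * (t / 2) : ℝ) * I by push_cast; ring, exp_mul_I, exp_mul_I,
      ← ofReal_cos, ← ofReal_sin, ← ofReal_cos, ← ofReal_sin, Real.sin_two_mul, Real.cos_two_mul]
    push_cast
    ring
  rw [hpolar, log_exp] <;> simp <;> linarith [Real.pi_pos]

lemma log_one_add_exp_pow_neg_sub {f k : ℕ} (hk : 2 * k < f) :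
    log (1 + exp (2 * Real.pi * I / f) ^ (-(k : ℤ))) -
      log (1 + exp (2 * Real.pi * I / f) ^ (-((f - k : ℕ) : ℤ))) =
      -(2 * Real.pi * I / f) * k := by
  have hf : (0 : ℝ) < f := by exact_mod_cast (show 0 < f by omega)
  have hf' : (f : ℂ) ≠ 0 := by exact_mod_cast hf.ne'
  set t : ℝ := 2 * Real.pi * k / f with ht
  have ht₀ : 0 ≤ t := by positivity
  have htπ : t < Real.pi := by
    rw [ht, div_lt_iff₀ hf]
    nlinarith [mul_lt_mul_of_pos_left (by exact_mod_cast hk : (2 * k : ℝ) < f) Real.pi_pos]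
  have hpow_k : exp (2 * Real.pi * I / f) ^ (-(k : ℤ)) = exp ((-t : ℝ) * I) := by
    rw [← exp_int_mul, ht]
    push_cast
    field_simp
  have hpow_f_sub_k : exp (2 * Real.pi * I / f) ^ (-((f - k : ℕ) : ℤ)) = exp (t * I) := by
    have harg : ((-((f - k : ℕ) : ℤ) : ℤ) : ℂ) * (2 * Real.pi * I / f) =
        t * I + ((-1 : ℤ) : ℂ) * (2 * Real.pi * I) := by
      rw [ht]
      push_cast [show k ≤ f by omega]
      field_simp
      ring
    rw [← exp_int_mul, harg, exp_add, exp_int_mul_two_pi_mul_I, mul_one]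
  rw [hpow_k, hpow_f_sub_k, log_one_add_exp_mul_I (by linarith) (by linarith),
    log_one_add_exp_mul_I (by linarith) htπ, neg_div, Real.cos_neg, ht]
  push_cast
  field_simp
  ring

lemma Finset.sum_filter_lt_two_mul_eq_sum_sub {M : Type*} [AddCommMonoid M] (f : ℕ) (g : ℕ → M) :
    ∑ k ∈ (Ico 1 f).filter (fun k => f < 2 * k), g k =
      ∑ k ∈ (Ico 1 f).filter (fun k => 2 * k < f), g (f - k) := by
  refine sum_nbij' (f - ·) (f - ·) ?_ ?_ ?_ ?_ ?_ <;>
    intro k hk <;> simp only [mem_filter, mem_Ico] at hk ⊢ <;> congr 1 <;> omega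

lemma sum_Icc_mul_eq_of_reflect_eq_neg {R : Type*} [CommRing R] [IsAddTorsionFree R]
    (f : ℕ) (c L : ℕ → R) (A : R) (hc_top : c f = 0) (hc : ∀ k ≤ f, c (f - k) = -c k)
    (hL : ∀ k, 2 * k < f → L k - L (f - k) = A * k) :
    ∑ k ∈ Finset.Icc 1 f, c k * L k =
      A * ∑ k ∈ (Finset.Ico 1 f).filter (fun k => 2 * k < f), c k * k := by
  have hc_half : ∀ k, 2 * k = f → c k = 0 := fun k hk =>
    self_eq_neg.mp (by simpa [show f - k = k by omega] using hc k (by omega))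
  have htop : ∑ k ∈ Finset.Ico 1 f, c k * L k = ∑ k ∈ Finset.Icc 1 f, c k * L k := by
    refine Finset.sum_subset Finset.Ico_subset_Icc_self fun k hk hk' => ?_
    simp only [Finset.mem_Icc, Finset.mem_Ico] at hk hk'
    rw [show k = f by omega, hc_top, zero_mul]
  have hupper : ∑ k ∈ (Finset.Ico 1 f).filter (fun k => ¬ 2 * k < f), c k * L k =
      ∑ k ∈ (Finset.Ico 1 f).filter (fun k => f < 2 * k), c k * L k := by
    refine (Finset.sum_subset ?_ fun k hk hk' => ?_).symm
    · intro k hk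
      simp only [Finset.mem_filter, Finset.mem_Ico] at hk ⊢
      omega
    · simp only [Finset.mem_filter, Finset.mem_Ico] at hk hk'
      rw [hc_half k (by omega), zero_mul]
  rw [← htop, ← Finset.sum_filter_add_sum_filter_not _ (fun k => 2 * k < f), hupper,
    Finset.sum_filter_lt_two_mul_eq_sum_sub, ← Finset.sum_add_distrib, Finset.mul_sum]
  refine Finset.sum_congr rfl fun k hk => ?_
  rw [Finset.mem_filter] at hk
  rw [hc k (by omega), neg_mul, ← sub_eq_add_neg, ← mul_sub, hL k hk.2]
  ring

theorem logSum_odd_general (f : ℕ) (χ : DirichletCharacter ℂ f)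
    (hodd : χ (-1) = -1) :
    (∑ k ∈ Finset.Icc 1 f,
        (starRingEnd ℂ) (χ ((k : ℕ) : ZMod f)) *
          Complex.log (1 + Complex.exp (2 * Real.pi * I / f) ^ (-(k : ℤ)))) =
      -(2 * Real.pi * I / f) *
        ∑ k ∈ (Finset.Ico 1 f).filter (fun k => 2 * k < f),
          (starRingEnd ℂ) (χ ((k : ℕ) : ZMod f)) * (k : ℂ) := by
  have hχ_neg : ∀ k ≤ f, χ ((f - k : ℕ) : ZMod f) = -χ k := fun k hk => by
    rw [Nat.cast_sub hk, ZMod.natCast_self, zero_sub, DirichletCharacter.Odd.eval_neg χ _ hodd]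
  have hχ_zero : χ 0 = 0 := self_eq_neg.mp (by simpa using hχ_neg 0 (Nat.zero_le f))
  refine sum_Icc_mul_eq_of_reflect_eq_neg f _ _ _ ?_ (fun k hk => ?_)
    (fun k hk => log_one_add_exp_pow_neg_sub hk)
  · simp [hχ_zero]
  · simp [hχ_neg k hk]

/-- For an odd primitive Dirichlet character `χ` of conductor `f`,
`∑_{k=1}^{f} χ̄(k)·Log(1 + ζ_f^{-k}) = -(2πi/f)·∑_{1 ≤ k < f/2} χ̄(k)·k`. -/
theorem logSum_odd (f : ℕ) [NeZero f] (χ : DirichletCharacter ℂ f)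
    (hprim : χ.IsPrimitive) (hodd : χ (-1) = -1) :
    (∑ k ∈ Finset.Icc 1 f,
        (starRingEnd ℂ) (χ ((k : ℕ) : ZMod f)) *
          Complex.log (1 + Complex.exp (2 * Real.pi * I / f) ^ (-(k : ℤ)))) =
      -(2 * Real.pi * I / f) *
        ∑ k ∈ (Finset.Ico 1 f).filter (fun k => 2 * k < f),
          (starRingEnd ℂ) (χ ((k : ℕ) : ZMod f)) * (k : ℂ) :=
  logSum_odd_general f χ hodd
end

section
/- Let m = p^n be a prime power with m odd or m ≡ 0 (mod 4), and let χ be a nontrivial character of G = (ℤ/mℤ)^*/{±1}, taken as a primitive Dirichlet character of conductor f_χ = p^s. Then Σ_{k∈G_χ} χ(k)·log|1 + ζ_{f_χ}^k| = ε·Σ_{k∈G} χ(k)·log|1 + ζ_m^k|, where ε = -1 if p = 2 and s < n, and ε = 1 otherwise; here the sums are over sets of representatives of G_χ = (ℤ/f_χℤ)^*/{±1} and of G, respectively. -/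
/-!
Write `m = f * d` with `f` the conductor. Grouping the residues `k < m` by `k mod f` and using
`∏_{t < d} (1 + ζ_d^t w) = 1 - (-w)^d` with `w = ζ_m^a` collapses the level sum to
`∑_{a < f} χ(a) log|1 - (-1)^d ζ_f^a|`. For `d` odd this is the conductor sum. For `d` even
(`p = 2`, `s < n`) use `log|1 + ζ| + log|1 - ζ| = log|1 - ζ^2|`: the resulting sum vanishes because
a primitive character mod `2g` with `g` even changes sign under `a ↦ a + g`.
-/

open Complex

noncomputable section

def zetaC (m : ℕ) : ℂ := Complex.exp (2 * Real.pi * I / m)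

open Finset

theorem Finset.sum_range_mul_eq_sum_sum {M : Type*} [AddCommMonoid M] (F : ℕ → M) (f d : ℕ) :
    ∑ k ∈ range (f * d), F k = ∑ a ∈ range f, ∑ t ∈ range d, F (a + f * t) := by
  induction d with
  | zero => simp
  | succ d ih =>
    rw [Nat.mul_succ, sum_range_add, ih]
    simp only [sum_range_succ, sum_add_distrib, add_comm]

theorem IsPrimitiveRoot.prod_one_add_pow_mul {R : Type*} [CommRing R] [IsDomain R] {ζ : R}
    {d : ℕ} (hζ : IsPrimitiveRoot ζ d) (hd : 0 < d) (w : R) :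
    ∏ t ∈ range d, (1 + ζ ^ t * w) = 1 - (-w) ^ d := by
  simpa [Polynomial.eval_prod] using
    (congrArg (Polynomial.eval 1) (X_pow_sub_C_eq_prod hζ hd (α := -w) rfl)).symm

theorem IsPrimitiveRoot.one_add_ne_zero {R : Type*} [CommRing R] {η : R} {N : ℕ}
    (hη : IsPrimitiveRoot η N) (hN : ¬ N ∣ 2) : 1 + η ≠ 0 := by
  intro h
  exact hN (hη.dvd_of_pow_eq_one 2 (by rw [eq_neg_of_add_eq_zero_right h]; ring))

theorem IsPrimitiveRoot.one_sub_ne_zero {R : Type*} [CommRing R] {η : R} {N : ℕ}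
    (hη : IsPrimitiveRoot η N) (hN : N ≠ 1) : 1 - η ≠ 0 := by
  intro h
  exact hN (hη.eq_orderOf ▸ orderOf_eq_one_iff.mpr (sub_eq_zero.mp h).symm)

theorem MulChar.natCast_coprime_of_apply_ne_zero {R : Type*} [CommMonoidWithZero R] {N : ℕ}
    (χ : MulChar (ZMod N) R) {k : ℕ} (h : χ k ≠ 0) : k.Coprime N :=
  (ZMod.isUnit_iff_coprime k N).mp (by_contra fun hk ↦ h (χ.map_nonunit hk))

namespace ZMod

variable {g : ℕ}

theorem natCast_add_natCast_self_eq_zero : (g : ZMod (2 * g)) + g = 0 := by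
  rw [← two_mul]; exact_mod_cast ZMod.natCast_self (2 * g)

theorem mul_natCast_half_of_isUnit {x : ZMod (2 * g)} (hx : IsUnit x) : x * g = g := by
  rcases eq_or_ne g 0 with rfl | hg
  · simp
  have : NeZero (2 * g) := ⟨by omega⟩
  obtain ⟨e, he⟩ : Odd x.val := Nat.coprime_two_right.mp <|
    ((ZMod.isUnit_iff_coprime _ _).mp (by rwa [ZMod.natCast_zmod_val])).coprime_dvd_right
      (dvd_mul_right 2 g)
  rw [← ZMod.natCast_zmod_val x, he]
  push_cast
  linear_combination (e : ZMod (2 * g)) * natCast_add_natCast_self_eq_zero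

theorem one_add_natCast_half_sq (hg : 2 ∣ g) : (1 + (g : ZMod (2 * g))) ^ 2 = 1 := by
  obtain ⟨e, he⟩ := hg
  have hge : (g : ZMod (2 * g)) = 2 * e := by rw [he]; push_cast; ring
  linear_combination (1 + (e : ZMod (2 * g))) * natCast_add_natCast_self_eq_zero +
    (g : ZMod (2 * g)) * hge

theorem eq_zero_or_eq_natCast_half_of_cast_eq_zero [NeZero g] {y : ZMod (2 * g)}
    (hy : (y.cast : ZMod g) = 0) : y = 0 ∨ y = g := by
  have : NeZero (2 * g) := ⟨by have := NeZero.ne g; omega⟩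
  rw [ZMod.cast_eq_val, ZMod.natCast_eq_zero_iff] at hy
  obtain ⟨c, hc⟩ := hy
  have hc2 : c < 2 := by
    have := y.val_lt
    rw [hc] at this
    exact lt_of_mul_lt_mul_left (by linarith) (Nat.zero_le g)
  rw [← ZMod.natCast_zmod_val y, hc]
  interval_cases c <;> simp

end ZMod

namespace DirichletCharacter

section CommMonoidWithZero

variable {R : Type*} [CommMonoidWithZero R] {n : ℕ}

theorem apply_natCast_eq_primitiveCharacter_apply (χ : DirichletCharacter R n)
    (h : ∀ k : ℕ, k.Coprime χ.conductor → k.Coprime n) (k : ℕ) :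
    χ k = χ.primitiveCharacter k := by
  by_cases hk : k.Coprime χ.conductor
  · simpa using (χ.primitiveCharacter_apply_of_isCoprime
      (a := k) (Nat.isCoprime_iff_coprime.mpr (h k hk))).symm
  · rw [χ.primitiveCharacter.map_nonunit (mt (ZMod.isUnit_iff_coprime _ _).mp hk),
      χ.map_nonunit]
    exact fun hu ↦ hk (((ZMod.isUnit_iff_coprime _ _).mp hu).coprime_dvd_right
      χ.conductor_dvd_level)

theorem conductor_ne_two [NeZero n] (χ : DirichletCharacter R n) : χ.conductor ≠ 2 := by
  intro h
  obtain ⟨_, χ₀, hχ₀⟩ := h ▸ χ.factorsThrough_conductor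
  have hχ₀1 : χ₀ = 1 := MulChar.ext fun a ↦ by rw [Subsingleton.elim a 1]; simp
  rw [hχ₀, hχ₀1, map_one, conductor_one] at h
  omega

theorem two_lt_conductor [NeZero n] {χ : DirichletCharacter R n} (hχ : χ ≠ 1) :
    2 < χ.conductor := by
  have h0 := χ.conductor_ne_zero
  have h1 : χ.conductor ≠ 1 := mt eq_one_iff_conductor_eq_one.mpr hχ
  have h2 := χ.conductor_ne_two
  omega

theorem IsPrimitive.not_factorsThrough {χ : DirichletCharacter R n} (hχ : χ.IsPrimitive)
    {d : ℕ} (hd : d < n) : ¬ χ.FactorsThrough d := fun h ↦ by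
  have : χ.conductor ≤ d := Nat.sInf_le ((mem_conductorSet_iff χ).mpr h)
  rw [hχ] at this
  omega

end CommMonoidWithZero

section CommRing

variable {R : Type*} [CommRing R] [IsDomain R] {g : ℕ}

theorem apply_one_add_natCast_half (hg : 2 ∣ g) (χ : DirichletCharacter R (2 * g))
    (hχ : ¬ χ.FactorsThrough g) : χ (1 + g) = -1 := by
  have : NeZero g := ⟨by rintro rfl; exact hχ (.same_level χ)⟩
  have : NeZero (2 * g) := ⟨by have := NeZero.ne g; omega⟩
  have hdvd : g ∣ 2 * g := dvd_mul_left g 2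
  -- `1 + g` generates the kernel of `(ZMod (2 * g))ˣ → (ZMod g)ˣ`.
  have hne : χ (1 + g) ≠ 1 := by
    intro h1
    refine hχ ((factorsThrough_iff_ker_unitsMap hdvd).mpr fun u hu ↦ ?_)
    have hu1 : ((u : ZMod (2 * g)) - 1).cast = (0 : ZMod g) := by
      rw [ZMod.cast_sub hdvd, ZMod.cast_one hdvd, ← ZMod.unitsMap_val hdvd,
        MonoidHom.mem_ker.mp hu, Units.val_one, sub_self]
    rw [MonoidHom.mem_ker, Units.ext_iff, MulChar.coe_toUnitHom, Units.val_one]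
    rcases ZMod.eq_zero_or_eq_natCast_half_of_cast_eq_zero hu1 with h | h
    · rw [sub_eq_zero.mp h, map_one]
    · rw [sub_eq_iff_eq_add'.mp h, h1]
  have hsq : χ (1 + g) * χ (1 + g) = 1 := by
    rw [← map_mul, ← sq, ZMod.one_add_natCast_half_sq hg, map_one]
  exact (mul_self_eq_one_iff.mp hsq).resolve_left hne

theorem apply_add_natCast_half (hg : 2 ∣ g) (χ : DirichletCharacter R (2 * g))
    (hχ : ¬ χ.FactorsThrough g) (x : ZMod (2 * g)) : χ (x + g) = -χ x := by
  by_cases hx : IsUnit x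
  · rw [← ZMod.mul_natCast_half_of_isUnit hx, ← mul_one_add, map_mul,
      χ.apply_one_add_natCast_half hg hχ, mul_neg_one]
  have hxg : ¬ IsUnit (x + g) := fun h ↦ hx <| by
    have hx' : x = (x + g) * (1 + g) := by
      rw [mul_one_add, ZMod.mul_natCast_half_of_isUnit h, add_assoc,
        ZMod.natCast_add_natCast_self_eq_zero, add_zero]
    exact hx' ▸ h.mul (.of_mul_eq_one _ (by rw [← sq, ZMod.one_add_natCast_half_sq hg]))
  rw [χ.map_nonunit hx, χ.map_nonunit hxg, neg_zero]

end CommRing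

end DirichletCharacter

theorem isPrimitiveRoot_zetaC {m : ℕ} (hm : m ≠ 0) : IsPrimitiveRoot (zetaC m) m :=
  Complex.isPrimitiveRoot_exp m hm

theorem zetaC_mul_pow_left {a b : ℕ} (ha : a ≠ 0) : zetaC (a * b) ^ a = zetaC b := by
  rw [zetaC, zetaC, ← Complex.exp_nat_mul]
  congr 1
  have ha' : (a : ℂ) ≠ 0 := Nat.cast_ne_zero.mpr ha
  push_cast
  rw [mul_div_assoc', mul_comm (a : ℂ), mul_comm (a : ℂ), mul_div_mul_right _ _ ha']

theorem zetaC_mul_pow_right {a b : ℕ} (hb : b ≠ 0) : zetaC (a * b) ^ b = zetaC a := by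
  rw [mul_comm, zetaC_mul_pow_left hb]

theorem prod_one_add_zetaC_pow_add_mul {f d : ℕ} (hf : f ≠ 0) (hd : d ≠ 0) (a : ℕ) :
    ∏ t ∈ range d, (1 + zetaC (f * d) ^ (a + f * t)) = 1 - (-1) ^ d * zetaC f ^ a := by
  have hζ : IsPrimitiveRoot (zetaC (f * d) ^ f) d :=
    (zetaC_mul_pow_left hf).symm ▸ isPrimitiveRoot_zetaC hd
  calc ∏ t ∈ range d, (1 + zetaC (f * d) ^ (a + f * t))
      = ∏ t ∈ range d, (1 + (zetaC (f * d) ^ f) ^ t * zetaC (f * d) ^ a) := by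
        simp_rw [pow_add, pow_mul, mul_comm]
    _ = 1 - (-zetaC (f * d) ^ a) ^ d := hζ.prod_one_add_pow_mul (Nat.pos_of_ne_zero hd) _
    _ = 1 - (-1) ^ d * zetaC f ^ a := by
        rw [neg_pow, ← pow_mul, mul_comm a, pow_mul, zetaC_mul_pow_right hd]

theorem sum_mul_log_norm_one_add_zetaC_pow_of_level_eq {m f d : ℕ} (hm : m = f * d)
    (hf : 2 < f) (hd : d ≠ 0) (χ : DirichletCharacter ℂ m) (χ₁ : DirichletCharacter ℂ f)
    (hχ : ∀ k : ℕ, χ k = χ₁ k) :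
    ∑ k ∈ range m, χ k * (Real.log ‖1 + zetaC m ^ k‖ : ℂ) =
      ∑ a ∈ range f, χ₁ a * (Real.log ‖1 - (-1) ^ d * zetaC f ^ a‖ : ℂ) := by
  subst hm
  rw [sum_range_mul_eq_sum_sum]
  refine sum_congr rfl fun a _ ↦ ?_
  have hcast (t : ℕ) : ((a + f * t : ℕ) : ZMod f) = a := by simp
  simp_rw [hχ, hcast, ← mul_sum]
  rcases eq_or_ne (χ₁ a) 0 with ha | ha
  · simp [ha]
  have hfd : 2 < f * d := hf.trans_le (Nat.le_mul_of_pos_right f (Nat.pos_of_ne_zero hd))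
  have hne (t : ℕ) (_ : t ∈ range d) : ‖1 + zetaC (f * d) ^ (a + f * t)‖ ≠ 0 := by
    have hcop := MulChar.natCast_coprime_of_apply_ne_zero χ (k := a + f * t) (by rwa [hχ, hcast])
    exact norm_ne_zero_iff.mpr (((isPrimitiveRoot_zetaC (by omega)).pow_of_coprime _ hcop
      ).one_add_ne_zero (Nat.not_dvd_of_pos_of_lt two_pos hfd))
  rw [← prod_one_add_zetaC_pow_add_mul (by omega) hd, norm_prod, Real.log_prod hne, ofReal_sum]

theorem sum_mul_log_norm_one_add_zetaC_pow_eq_neg {N g : ℕ} (hN : N = 2 * g) (hg : 2 ∣ g)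
    (χ : DirichletCharacter ℂ N) (hχ : ¬ χ.FactorsThrough g) :
    ∑ a ∈ range N, χ a * (Real.log ‖1 + zetaC N ^ a‖ : ℂ) =
      -∑ a ∈ range N, χ a * (Real.log ‖1 - zetaC N ^ a‖ : ℂ) := by
  subst hN
  have hg0 : g ≠ 0 := by rintro rfl; exact hχ (.same_level χ)
  have hpair (a : ℕ) : χ a * (Real.log ‖1 + zetaC (2 * g) ^ a‖ : ℂ) +
      χ a * (Real.log ‖1 - zetaC (2 * g) ^ a‖ : ℂ) =
      χ a * (Real.log ‖1 - zetaC g ^ a‖ : ℂ) := by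
    rcases eq_or_ne (χ a) 0 with ha | ha
    · simp [ha]
    have hη := (isPrimitiveRoot_zetaC (by omega)).pow_of_coprime a
      (MulChar.natCast_coprime_of_apply_ne_zero χ ha)
    have hplus := norm_ne_zero_iff.mpr (hη.one_add_ne_zero (Nat.not_dvd_of_pos_of_lt two_pos
      (by omega)))
    have hminus := norm_ne_zero_iff.mpr (hη.one_sub_ne_zero (by omega))
    have hprod : (1 + zetaC (2 * g) ^ a) * (1 - zetaC (2 * g) ^ a) = 1 - zetaC g ^ a := by
      rw [← zetaC_mul_pow_left (b := g) two_ne_zero, ← pow_mul, mul_comm 2 a, pow_mul]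
      ring
    rw [← mul_add, ← ofReal_add, ← Real.log_mul hplus hminus, ← norm_mul, hprod]
  rw [eq_neg_iff_add_eq_zero, ← sum_add_distrib]
  simp_rw [hpair]
  rw [show range (2 * g) = range (g + g) by rw [two_mul], sum_range_add, ← sum_add_distrib]
  refine sum_eq_zero fun a _ ↦ ?_
  rw [Nat.cast_add, add_comm (g : ZMod (2 * g)), χ.apply_add_natCast_half hg hχ, pow_add,
    (isPrimitiveRoot_zetaC hg0).pow_eq_one, one_mul]
  ring

theorem sum_conductor_eq_sum_level_general (p n s m : ℕ) (hp : p.Prime) (hm : m = p ^ n)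
    (χ : DirichletCharacter ℂ m) (hχ : χ ≠ 1)
    (hf : χ.conductor = p ^ s) :
    (1 / 2 : ℂ) * ∑ k ∈ Finset.range χ.conductor,
        χ.primitiveCharacter ((k : ℕ) : ZMod χ.conductor) *
          (Real.log ‖1 + zetaC χ.conductor ^ k‖ : ℂ) =
      (if p = 2 ∧ s < n then (-1 : ℂ) else 1) *
        ((1 / 2 : ℂ) * ∑ k ∈ Finset.range m,
          χ ((k : ℕ) : ZMod m) * (Real.log ‖1 + zetaC m ^ k‖ : ℂ)) := by
  subst hm
  have : NeZero (p ^ n) := ⟨pow_ne_zero n hp.ne_zero⟩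
  have hf2 : 2 < p ^ s := hf ▸ DirichletCharacter.two_lt_conductor hχ
  have hs : s ≠ 0 := by rintro rfl; simp at hf2
  have hsn : s ≤ n := (Nat.pow_dvd_pow_iff_le_right hp.one_lt).mp (hf ▸ χ.conductor_dvd_level)
  have hlevel : p ^ n = χ.conductor * p ^ (n - s) := by
    rw [hf, ← pow_add, Nat.add_sub_cancel' hsn]
  have hχ₁ : ∀ k : ℕ, χ k = χ.primitiveCharacter k :=
    χ.apply_natCast_eq_primitiveCharacter_apply fun k hk ↦ by
      rw [hf, Nat.coprime_pow_right_iff (Nat.pos_of_ne_zero hs)] at hk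
      exact hk.pow_right n
  rw [sum_mul_log_norm_one_add_zetaC_pow_of_level_eq hlevel (hf ▸ hf2)
    (pow_ne_zero _ hp.ne_zero) χ _ hχ₁]
  split_ifs with h2
  · obtain ⟨rfl, hsn'⟩ := h2
    have hs2 : 1 < s := (Nat.pow_lt_pow_iff_right one_lt_two).mp hf2
    have hg : χ.conductor = 2 * 2 ^ (s - 1) := by rw [hf, ← pow_succ']; congr; omega
    have hg0 := Nat.two_pow_pos (s - 1)
    rw [(Nat.even_pow.mpr ⟨even_two, by omega⟩).neg_one_pow,
      sum_mul_log_norm_one_add_zetaC_pow_eq_neg hg (dvd_pow_self 2 (by omega)) _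
        (χ.primitiveCharacter_isPrimitive.not_factorsThrough (by omega))]
    simp
  · have hodd : Odd (p ^ (n - s)) := by
      rcases hp.eq_two_or_odd' with rfl | hp2
      · rw [show n - s = 0 by omega, pow_zero]
        exact odd_one
      · exact hp2.pow
    simp only [hodd.neg_one_pow, neg_one_mul, sub_neg_eq_add, one_mul]

/-- Let `m = p^n` be a prime power with `m` odd or `m ≡ 0 (mod 4)`, and
let `χ` be a nontrivial even Dirichlet character mod `m`, whose attached primitive character
has conductor `f_χ = p^s`.  Then
`∑_{k∈G_χ} χ(k)·log|1+ζ_{f_χ}^k| = ε·∑_{k∈G} χ(k)·log|1+ζ_m^k|` where `ε = -1` if `p = 2`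
and `s < n`, and `ε = 1` otherwise; each sum over representatives of `G_χ` (resp. `G`) is
written as half the full sum over residues mod `f_χ` (resp. mod `m`). -/
theorem sum_conductor_eq_sum_level (p n s m : ℕ) (hp : p.Prime) (hn : 0 < n) (hm : m = p ^ n)
    (hm4 : Odd m ∨ m % 4 = 0) (χ : DirichletCharacter ℂ m) (hχ : χ ≠ 1) (heven : χ (-1) = 1)
    (hf : χ.conductor = p ^ s) :
    (1 / 2 : ℂ) * ∑ k ∈ Finset.range χ.conductor,
        χ.primitiveCharacter ((k : ℕ) : ZMod χ.conductor) *
          (Real.log ‖1 + zetaC χ.conductor ^ k‖ : ℂ) =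
      (if p = 2 ∧ s < n then (-1 : ℂ) else 1) *
        ((1 / 2 : ℂ) * ∑ k ∈ Finset.range m,
          χ ((k : ℕ) : ZMod m) * (Real.log ‖1 + zetaC m ^ k‖ : ℂ)) :=
  sum_conductor_eq_sum_level_general p n s m hp hm χ hχ hf

end
end

section
/- Let s ≥ 2 and let χ be a primitive Dirichlet character of conductor 2^s. Then χ(1 + 2^{s-1}) = -1. -/
/-!
Put `x = 1 + 2^{s-1}`. Since `x² = 1 + 2^s (1 + 2^{s-2}) ≡ 1 (mod 2^s)`, `χ x = ±1`. The units
of `ZMod (2^s)` that are `≡ 1 (mod 2^{s-1})` are exactly `1` and `x`, so `χ x = 1` would make `χ`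
trivial on the kernel of reduction mod `2^{s-1}`, i.e. `χ` would factor through `2^{s-1}`,
contradicting primitivity.
-/

namespace ZMod

theorem eq_one_or_eq_one_add_of_cast_eq_one {m n : ℕ} [NeZero n] (hm : 1 < m) (hn : n ≤ 2 * m)
    {u : ZMod n} (hu : (cast u : ZMod m) = 1) : u = 1 ∨ u = 1 + m := by
  have hmod : u.val % m = 1 := by
    rw [cast_eq_val, ← Nat.cast_one, natCast_eq_natCast_iff'] at hu
    rwa [Nat.one_mod_eq_one.mpr hm.ne'] at hu
  have hq : u.val / m < 2 := Nat.div_lt_of_lt_mul (by linarith [u.val_lt])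
  have hval := Nat.div_add_mod u.val m
  rw [← natCast_zmod_val u]
  obtain h | h : u.val / m = 0 ∨ u.val / m = 1 := by generalize u.val / m = q at hq; omega
  · left
    rw [h, hmod] at hval
    simp [← hval]
  · right
    rw [h, hmod] at hval
    simp [← hval, add_comm]

end ZMod

namespace DirichletCharacter

variable {R : Type*} [CommMonoidWithZero R] {n : ℕ}

theorem IsPrimitive.le_of_factorsThrough {χ : DirichletCharacter R n} (hχ : χ.IsPrimitive)
    {d : ℕ} (h : χ.FactorsThrough d) : n ≤ d :=
  hχ ▸ Nat.sInf_le h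

theorem factorsThrough_of_apply_one_add_eq_one [NeZero n] {χ : DirichletCharacter R n} {m : ℕ}
    (hm : 1 < m) (hmn : m ∣ n) (hn : n ≤ 2 * m) (h : χ (1 + m) = 1) : χ.FactorsThrough m := by
  rw [factorsThrough_iff_ker_unitsMap hmn]
  intro u hu
  have hu' : (ZMod.cast (u : ZMod n) : ZMod m) = 1 := by
    simpa [← ZMod.unitsMap_val hmn] using congrArg Units.val hu
  rw [MonoidHom.mem_ker, Units.ext_iff, MulChar.coe_toUnitHom, Units.val_one]
  rcases ZMod.eq_one_or_eq_one_add_of_cast_eq_one hm hn hu' with hu1 | hu1 <;> rw [hu1]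
  · exact map_one χ
  · exact h

end DirichletCharacter

/-- For `s ≥ 2` and a primitive Dirichlet character `χ` of conductor `2^s`,
`χ(1 + 2^{s-1}) = -1`. -/
theorem primitive_char_val_one_add_half_conductor (s : ℕ) (hs : 2 ≤ s)
    (χ : DirichletCharacter ℂ (2 ^ s)) (hprim : χ.IsPrimitive) :
    χ ((1 + 2 ^ (s - 1) : ℕ) : ZMod (2 ^ s)) = -1 := by
  obtain ⟨t, rfl⟩ : ∃ t, s = t + 2 := ⟨s - 2, by omega⟩
  have hpow : 2 ^ (t + 2) = 2 * 2 ^ (t + 1) := by ring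
  have hsq : ((1 + 2 ^ (t + 1) : ℕ) : ZMod (2 ^ (t + 2))) ^ 2 = 1 := by
    have : (1 + 2 ^ (t + 1)) ^ 2 = 1 + 2 ^ (t + 2) * (1 + 2 ^ t) := by ring
    rw [← Nat.cast_pow, this]
    simp
  have hχsq : χ ((1 + 2 ^ (t + 1) : ℕ) : ZMod (2 ^ (t + 2))) ^ 2 = 1 := by
    rw [← map_pow, hsq, map_one]
  rcases sq_eq_one_iff.mp hχsq with h | h
  · have hfac : χ.FactorsThrough (2 ^ (t + 1)) :=
      DirichletCharacter.factorsThrough_of_apply_one_add_eq_one (Nat.one_lt_two_pow (by omega))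
        (pow_dvd_pow 2 (by omega)) hpow.le (by simpa using h)
    exact absurd (hprim.le_of_factorsThrough hfac)
      (Nat.pow_lt_pow_right one_lt_two (by omega)).not_ge
  · exact h
end
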